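/- arXiv:0708.1550 — 5 statements merged into one kernel-verified Lean document; each statement's English description precedes it below -/
import Mathlib

section
/- Let f : D → ℂ be a bounded holomorphic function on the open unit disc D ⊆ ℂ with f(0) = 0. Let (aᵢ) be the sequence of zeros of f in D other than 0 (listed with multiplicity). If the infinite product ∏ᵢ |aᵢ| equals 0 (i.e., ∑ᵢ (1 - |aᵢ|) diverges, equivalently the partial products of moduli tend to 0), then f'(0) = 0. -/
/-!
For every `N`, dividing `f` by `z ∏_{j<N} (z - aⱼ)` leaves a holomorphic function `q_N` on the
disc: the multiplicity hypothesis guarantees that each successive divided difference still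
vanishes at the next zero. Multiplying `q_N` by `∏_{j<N} (1 - āⱼ z)` gives `f` divided by a
finite Blaschke product, which has modulus tending to `1` at the boundary, so the maximum
modulus principle yields `‖q_N 0‖ ≤ M`. Since `f'(0) = q_N(0) ∏_{j<N} (-aⱼ)`, we get
`‖f'(0)‖ ≤ M ∏_{j<N} ‖aⱼ‖ → 0`.
-/

open Complex ComplexConjugate Metric Filter Topology Finset

noncomputable def dslopeChain {𝕜 E : Type*} [NontriviallyNormedField 𝕜] [NormedAddCommGroup E]
    [NormedSpace 𝕜 E] (g : 𝕜 → E) (b : ℕ → 𝕜) : ℕ → 𝕜 → E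
  | 0 => g
  | i + 1 => dslope (dslopeChain g b i) (b i)

section DslopeChain

variable {𝕜 : Type*} [NontriviallyNormedField 𝕜]

theorem prod_sub_smul_dslopeChain {E : Type*} [NormedAddCommGroup E] [NormedSpace 𝕜 E]
    {g : 𝕜 → E} {b : ℕ → 𝕜} {i : ℕ} (h : ∀ j < i, dslopeChain g b j (b j) = 0) (z : 𝕜) :
    (∏ j ∈ range i, (z - b j)) • dslopeChain g b i z = g z := by
  induction i with
  | zero => simp [dslopeChain]
  | succ i ih =>
    rw [prod_range_succ, mul_smul, dslopeChain,
      sub_smul_dslope_of_zero (h i i.lt_succ_self), ih fun j hj => h j (by omega)]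

theorem eq_mul_prod_sub_mul_dslopeChain {f : 𝕜 → 𝕜} {b : ℕ → 𝕜} {i : ℕ} (hf0 : f 0 = 0)
    (h : ∀ j < i, dslopeChain (dslope f 0) b j (b j) = 0) (z : 𝕜) :
    f z = z * (∏ j ∈ range i, (z - b j)) * dslopeChain (dslope f 0) b i z := by
  rw [← sub_smul_dslope_of_zero hf0 z, ← prod_sub_smul_dslopeChain h z, sub_zero, smul_eq_mul,
    smul_eq_mul, mul_assoc]

theorem differentiableOn_dslopeChain {E : Type*} [NormedAddCommGroup E] [NormedSpace ℂ E]
    [CompleteSpace E] {g : ℂ → E} {b : ℕ → ℂ} {U : Set ℂ} (hU : IsOpen U)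
    (hg : DifferentiableOn ℂ g U) (hb : ∀ j, b j ∈ U) (i : ℕ) :
    DifferentiableOn ℂ (dslopeChain g b i) U := by
  induction i with
  | zero => exact hg
  | succ i ih => exact (differentiableOn_dslope (hU.mem_nhds (hb i))).2 ih

end DslopeChain

section AnalyticOrder

variable {𝕜 : Type*} [NontriviallyNormedField 𝕜]

theorem analyticOrderAt_prod_sub {ι : Type*} [DecidableEq 𝕜] (s : Finset ι) (b : ι → 𝕜)
    (x : 𝕜) : analyticOrderAt (fun z => ∏ j ∈ s, (z - b j)) x = #{j ∈ s | b j = x} := by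
  classical
  induction s using Finset.induction with
  | empty => simp [analyticOrderAt_eq_zero]
  | insert i s hi ih =>
    have hprod : (fun z => ∏ j ∈ insert i s, (z - b j))
        = (· - b i) * fun z => ∏ j ∈ s, (z - b j) := by
      ext z
      simp [prod_insert hi]
    rw [hprod, analyticOrderAt_mul (by fun_prop) (by fun_prop), ih, filter_insert]
    by_cases hx : b i = x
    · subst hx
      simp [hi, add_comm]
    · simp [hx, Ne.symm hx]

theorem apply_eq_zero_of_analyticOrderAt_lt {f p g : 𝕜 → 𝕜} {x : 𝕜} (hp : AnalyticAt 𝕜 p x)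
    (hg : AnalyticAt 𝕜 g x) (hfpg : f =ᶠ[𝓝 x] p * g)
    (hlt : analyticOrderAt p x < analyticOrderAt f x) : g x = 0 := by
  rw [analyticOrderAt_congr hfpg, analyticOrderAt_mul hp hg] at hlt
  refine apply_eq_zero_of_analyticOrderAt_ne_zero fun h => ?_
  simp [h] at hlt

theorem natCast_sInf_le_analyticOrderAt [CharZero 𝕜] {E : Type*} [NormedAddCommGroup E]
    [NormedSpace 𝕜 E] [CompleteSpace E] {f : 𝕜 → E} {x : 𝕜} (hf : AnalyticAt 𝕜 f x)
    (hx : f x = 0) :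
    ((sInf {n | 0 < n ∧ iteratedDeriv n f x ≠ 0} : ℕ) : ℕ∞) ≤ analyticOrderAt f x := by
  rw [natCast_le_analyticOrderAt_iff_iteratedDeriv_eq_zero hf]
  intro n hn
  rcases n.eq_zero_or_pos with rfl | hpos
  · simpa using hx
  · by_contra hne
    exact (Nat.sInf_le (show n ∈ {n | 0 < n ∧ iteratedDeriv n f x ≠ 0} from ⟨hpos, hne⟩)).not_gt
      hn

end AnalyticOrder

theorem card_filter_range_lt_encard {α : Type*} [DecidableEq α] (a : ℕ → α) (i : ℕ) :
    (#{j ∈ range i | a j = a i} : ℕ∞) < {j | a j = a i}.encard := by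
  have hsub : ((insert i {j ∈ range i | a j = a i} : Finset ℕ) : Set ℕ) ⊆ {j | a j = a i} := by
    intro j hj
    simp only [coe_insert, coe_filter, Set.mem_insert_iff, Set.mem_ofPred_eq] at hj
    rcases hj with rfl | hj
    · rfl
    · exact hj.2
  have := Set.encard_le_encard hsub
  rw [Set.encard_coe_eq_coe_finsetCard, card_insert_of_notMem (by simp)] at this
  exact lt_of_lt_of_le (by exact_mod_cast Nat.lt_succ_self _) this

theorem dslopeChain_apply_eq_zero {f : ℂ → ℂ} {a : ℕ → ℂ}
    (hf : DifferentiableOn ℂ f (ball 0 1)) (hf0 : f 0 = 0)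
    (ha : ∀ i, a i ∈ ball (0 : ℂ) 1 ∧ a i ≠ 0 ∧ f (a i) = 0)
    (hmult : ∀ x ∈ ball (0 : ℂ) 1, x ≠ 0 → f x = 0 →
      Set.encard {i | a i = x} =
        ((sInf {n : ℕ | 0 < n ∧ iteratedDeriv n f x ≠ 0} : ℕ) : ℕ∞))
    (i : ℕ) : dslopeChain (dslope f 0) a i (a i) = 0 := by
  induction i using Nat.strong_induction_on with | _ i ih => ?_
  obtain ⟨hx, hx0, hfx⟩ := ha i
  have hmem : ball (0 : ℂ) 1 ∈ 𝓝 (a i) := isOpen_ball.mem_nhds hx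
  have hq : AnalyticAt ℂ (dslopeChain (dslope f 0) a i) (a i) :=
    (differentiableOn_dslopeChain isOpen_ball
      ((differentiableOn_dslope (ball_mem_nhds 0 one_pos)).2 hf)
      (fun j => (ha j).1) i).analyticAt hmem
  refine apply_eq_zero_of_analyticOrderAt_lt (p := id * fun z => ∏ j ∈ range i, (z - a j))
    (by fun_prop) hq (.of_forall (eq_mul_prod_sub_mul_dslopeChain hf0 ih)) ?_
  calc analyticOrderAt (id * fun z => ∏ j ∈ range i, (z - a j)) (a i)
      = #{j ∈ range i | a j = a i} := by
        rw [analyticOrderAt_mul (by fun_prop) (by fun_prop), analyticOrderAt_prod_sub,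
          (analyticOrderAt_eq_zero (f := id)).2 (.inr hx0), zero_add]
    _ < {j | a j = a i}.encard := card_filter_range_lt_encard a i
    _ ≤ analyticOrderAt f (a i) :=
        hmult _ hx hx0 hfx ▸ natCast_sInf_le_analyticOrderAt (hf.analyticAt hmem) hfx

theorem norm_one_sub_conj_mul_sq (a z : ℂ) :
    ‖1 - conj a * z‖ ^ 2 = ‖z - a‖ ^ 2 + (1 - ‖a‖ ^ 2) * (1 - ‖z‖ ^ 2) := by
  simp only [Complex.sq_norm, normSq_apply, sub_re, sub_im, mul_re, mul_im, conj_re, conj_im,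
    one_re, one_im]
  ring

theorem norm_one_sub_conj_mul_div_norm_sub_le {a z : ℂ} {r : ℝ} (hz : ‖z‖ = r) (har : ‖a‖ < r)
    (hr : r ≤ 1) : ‖1 - conj a * z‖ / ‖z - a‖ ≤ (1 - ‖a‖ * r) / (r - ‖a‖) := by
  have hdist : r - ‖a‖ ≤ ‖z - a‖ := hz ▸ norm_sub_norm_le z a
  have hra : 0 < r - ‖a‖ := by linarith
  have har1 : ‖a‖ * r < 1 := by nlinarith [norm_nonneg a]
  rw [div_le_div_iff₀ (hra.trans_le hdist) hra]
  refine le_of_pow_le_pow_left₀ two_ne_zero (by nlinarith [norm_nonneg (z - a)]) ?_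
  rw [mul_pow, mul_pow, norm_one_sub_conj_mul_sq, hz]
  have h1 : 0 ≤ (1 - ‖a‖ ^ 2) * (1 - r ^ 2) := by
    apply mul_nonneg <;> nlinarith [norm_nonneg a]
  have h2 : (r - ‖a‖) ^ 2 ≤ ‖z - a‖ ^ 2 := pow_le_pow_left₀ hra.le hdist 2
  nlinarith [mul_le_mul_of_nonneg_left h2 h1]

theorem norm_le_of_forall_sphere_norm_le_of_tendsto {E : Type*} [NormedAddCommGroup E]
    [NormedSpace ℂ E] {g : ℂ → E} (hg : DifferentiableOn ℂ g (ball 0 1)) {F : ℝ → ℝ} {L : ℝ}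
    (hF : Tendsto F (𝓝[<] 1) (𝓝 L)) (hgF : ∀ᶠ r in 𝓝[<] 1, ∀ z, ‖z‖ = r → ‖g z‖ ≤ F r)
    {w : ℂ} (hw : w ∈ ball (0 : ℂ) 1) : ‖g w‖ ≤ L := by
  rw [mem_ball_zero_iff] at hw
  refine ge_of_tendsto hF ?_
  filter_upwards [hgF, Ioo_mem_nhdsLT hw] with r hgr ⟨hwr, hr1⟩
  have hr0 : 0 < r := (norm_nonneg w).trans_lt hwr
  refine Complex.norm_le_of_forall_mem_frontier_norm_le isBounded_ball ?_ ?_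
    (subset_closure (mem_ball_zero_iff.2 hwr))
  · refine DifferentiableOn.diffContOnCl ?_
    rw [closure_ball _ hr0.ne']
    exact hg.mono (closedBall_subset_ball hr1)
  · rw [frontier_ball _ hr0.ne']
    exact fun z hz => hgr z (mem_sphere_zero_iff_norm.1 hz)

theorem norm_apply_zero_le_of_eq_mul_prod_sub_mul {ι : Type*} {f q : ℂ → ℂ} {M : ℝ}
    (s : Finset ι) (a : ι → ℂ) (ha : ∀ j ∈ s, ‖a j‖ < 1)
    (hq : DifferentiableOn ℂ q (ball 0 1)) (hf : ∀ z ∈ ball (0 : ℂ) 1, ‖f z‖ ≤ M)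
    (hfq : ∀ z ∈ ball (0 : ℂ) 1, f z = z * (∏ j ∈ s, (z - a j)) * q z) : ‖q 0‖ ≤ M := by
  set F : ℝ → ℝ := fun r => M / r * ∏ j ∈ s, (1 - ‖a j‖ * r) / (r - ‖a j‖)
  have hM : 0 ≤ M := (norm_nonneg _).trans (hf 0 (mem_ball_self one_pos))
  have hF : Tendsto F (𝓝[<] 1) (𝓝 M) := by
    have hne : ∀ j ∈ s, 1 - ‖a j‖ ≠ 0 := fun j hj => (sub_pos.2 (ha j hj)).ne'
    have hcont : ContinuousAt F 1 := by
      refine (continuousAt_const.div continuousAt_id one_ne_zero).mul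
        (tendsto_finsetProd s fun j hj => ?_)
      exact (continuousAt_const.sub (continuousAt_const.mul continuousAt_id)).div
        (continuousAt_id.sub continuousAt_const) (hne j hj)
    have hF1 : F 1 = M := by
      simp only [F, div_one, mul_one]
      rw [prod_congr rfl fun j hj => div_self (hne j hj), prod_const_one, mul_one]
    exact hF1 ▸ hcont.tendsto.mono_left nhdsWithin_le_nhds
  have hbd : ∀ᶠ r in 𝓝[<] 1, ∀ z : ℂ, ‖z‖ = r →
      ‖(∏ j ∈ s, (1 - conj (a j) * z)) * q z‖ ≤ F r := by
    filter_upwards [self_mem_nhdsWithin, nhdsWithin_le_nhds ((eventually_all_finset s).2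
      fun j hj => eventually_gt_nhds (ha j hj)), nhdsWithin_le_nhds (eventually_gt_nhds one_pos)]
      with r hr1 har hr0 z hz
    have hzb : z ∈ ball (0 : ℂ) 1 := mem_ball_zero_iff.2 (hz ▸ hr1)
    have hprod : ∏ j ∈ s, ‖z - a j‖ ≠ 0 := prod_ne_zero_iff.2 fun j hj =>
      (lt_of_lt_of_le (sub_pos.2 (har j hj)) (hz ▸ norm_sub_norm_le z (a j))).ne'
    calc ‖(∏ j ∈ s, (1 - conj (a j) * z)) * q z‖
        = ‖f z‖ / r * ∏ j ∈ s, ‖1 - conj (a j) * z‖ / ‖z - a j‖ := by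
          rw [hfq z hzb, norm_mul, norm_mul, norm_mul, norm_prod, norm_prod, hz, prod_div_distrib]
          field_simp
          simp only [mul_comm z, mul_comm (‖q z‖)]
      _ ≤ M / r * ∏ j ∈ s, (1 - ‖a j‖ * r) / (r - ‖a j‖) := by
          gcongr ?_ / r * ∏ j ∈ s, ?_ with j hj
          · exact hf z hzb
          · exact norm_one_sub_conj_mul_div_norm_sub_le hz (har j hj) hr1.le
  simpa using norm_le_of_forall_sphere_norm_le_of_tendsto
    ((DifferentiableOn.fun_finsetProd fun j _ => by fun_prop).mul hq) hF hbd (mem_ball_self one_pos)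

theorem deriv_zero_of_zero_product_general (f : ℂ → ℂ)
    (hf : DifferentiableOn ℂ f (Metric.ball (0 : ℂ) 1))
    (M : ℝ)
    (hbound : ∀ z ∈ Metric.ball (0 : ℂ) 1, ‖f z‖ ≤ M)
    (hf0 : f 0 = 0)
    (a : ℕ → ℂ)
    (ha : ∀ i, a i ∈ Metric.ball (0 : ℂ) 1 ∧ a i ≠ 0 ∧ f (a i) = 0)
    (hmult : ∀ x ∈ Metric.ball (0 : ℂ) 1, x ≠ 0 → f x = 0 →
      Set.encard {i | a i = x} =
        ((sInf {n : ℕ | 0 < n ∧ iteratedDeriv n f x ≠ 0} : ℕ) : ℕ∞))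
    (hprod : Tendsto (fun N => ∏ i ∈ Finset.range N, ‖a i‖) atTop (nhds 0)) :
    deriv f 0 = 0 := by
  have hzero (j : ℕ) := dslopeChain_apply_eq_zero hf hf0 ha hmult j
  have hq := differentiableOn_dslopeChain isOpen_ball
    ((differentiableOn_dslope (ball_mem_nhds 0 one_pos)).2 hf) fun j => (ha j).1
  have hbd (N : ℕ) : ‖deriv f 0‖ ≤ M * ∏ j ∈ range N, ‖a j‖ := by
    have hqN : ‖dslopeChain (dslope f 0) a N 0‖ ≤ M :=
      norm_apply_zero_le_of_eq_mul_prod_sub_mul (range N) a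
        (fun j _ => mem_ball_zero_iff.1 (ha j).1) (hq N) hbound
        fun z _ => eq_mul_prod_sub_mul_dslopeChain hf0 (fun j _ => hzero j) z
    rw [← dslope_same, ← prod_sub_smul_dslopeChain (fun j _ => hzero j) 0, smul_eq_mul,
      norm_mul, norm_prod, mul_comm M]
    simpa using mul_le_mul_of_nonneg_left hqN (prod_nonneg fun j _ => norm_nonneg (a j))
  exact norm_le_zero_iff.1 (ge_of_tendsto (by simpa using hprod.const_mul M) (.of_forall hbd))

/-- Generalized Schwarz lemma: let `f` be a bounded holomorphic function on the open
unit disc with `f 0 = 0`, not identically zero, and let `(aᵢ)` be the sequence of its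
zeros other than `0`, listed with multiplicity (each zero `x ≠ 0` appears exactly as
many times as the vanishing order of `f` at `x`). If the infinite product `∏ᵢ |aᵢ|`
converges to `0`, then `f'(0) = 0`. -/
theorem deriv_zero_of_zero_product (f : ℂ → ℂ)
    (hf : DifferentiableOn ℂ f (Metric.ball (0 : ℂ) 1))
    (M : ℝ) (hM : 0 < M)
    (hbound : ∀ z ∈ Metric.ball (0 : ℂ) 1, ‖f z‖ ≤ M)
    (hf0 : f 0 = 0)
    (hnz : ∃ z ∈ Metric.ball (0 : ℂ) 1, f z ≠ 0)
    (a : ℕ → ℂ)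
    (ha : ∀ i, a i ∈ Metric.ball (0 : ℂ) 1 ∧ a i ≠ 0 ∧ f (a i) = 0)
    (hmult : ∀ x ∈ Metric.ball (0 : ℂ) 1, x ≠ 0 → f x = 0 →
      Set.encard {i | a i = x} =
        ((sInf {n : ℕ | 0 < n ∧ iteratedDeriv n f x ≠ 0} : ℕ) : ℕ∞))
    (hprod : Tendsto (fun N => ∏ i ∈ Finset.range N, ‖a i‖) atTop (nhds 0)) :
    deriv f 0 = 0 :=
  deriv_zero_of_zero_product_general f hf M hbound hf0 a ha hmult hprod
end

section
/- Let f : D → ℂ be holomorphic on the unit disc, surjective onto ℂ, and semi-proper (every connected component of the preimage of any compact subset of ℂ is compact in D). If f(0) = 0 and f'(0) ≠ 0, then the product of the moduli of the zeros of f other than 0, listed with multiplicity, is 0. -/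
open Complex Metric Filter Set Topology ComplexConjugate
open scoped Finset

/-!
Write `f z = z g z` with `g = dslope f 0`, so `g 0 = f'(0)` and the `aᵢ` are the zeros of `g`
counted with multiplicity. Given `R > 0`, let `K` be the component of `{|f| ≤ R}` containing `0`:
it is compact by semi-properness, `|f| ≥ R` on its frontier, and it contains only finitely many
`aᵢ`, say all with `i < N`. Then `g = ∏_{i<N} (z - aᵢ) H` with `H` zero-free on `K`, and the
maximum principle applied on `K` to `R z B² / f`, where `B = ∏_{i<N} (z - aᵢ) / (1 - conj aᵢ z)`,
gives `R (∏_{i<N} |aᵢ|)² ≤ |f'(0)|`. Since `R` is arbitrary and the partial products decrease,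
they tend to `0`.
-/

theorem one_sub_conj_mul_ne_zero_of_norm_lt_one {a z : ℂ} (ha : ‖a‖ < 1) (hz : ‖z‖ ≤ 1) :
    1 - conj a * z ≠ 0 := by
  refine sub_ne_zero.2 fun h => ?_
  have : ‖conj a * z‖ < 1 := by
    rw [norm_mul, RCLike.norm_conj]
    exact mul_lt_one_of_nonneg_of_lt_one_left (norm_nonneg a) ha hz
  rw [← h, norm_one] at this
  exact lt_irrefl _ this

theorem norm_sub_le_norm_one_sub_conj_mul {a z : ℂ} (ha : ‖a‖ ≤ 1) (hz : ‖z‖ ≤ 1) :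
    ‖z - a‖ ≤ ‖1 - conj a * z‖ := by
  rw [← sq_le_sq₀ (norm_nonneg _) (norm_nonneg _), Complex.sq_norm, Complex.sq_norm]
  have hdiff : normSq (1 - conj a * z) - normSq (z - a) = (1 - normSq a) * (1 - normSq z) := by
    simp only [normSq_apply, sub_re, sub_im, mul_re, mul_im, conj_re, conj_im, one_re, one_im]
    ring
  have ha' : normSq a ≤ 1 := by rw [normSq_eq_norm_sq]; nlinarith [norm_nonneg a]
  have hz' : normSq z ≤ 1 := by rw [normSq_eq_norm_sq]; nlinarith [norm_nonneg z]
  nlinarith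

theorem Antitone.tendsto_zero_of_forall_mul_sq_le {u : ℕ → ℝ} {C : ℝ} (hu : Antitone u)
    (hu0 : ∀ n, 0 ≤ u n) (h : ∀ R > 0, ∃ n, R * u n ^ 2 ≤ C) : Tendsto u atTop (𝓝 0) := by
  rw [Metric.tendsto_atTop]
  intro ε hε
  obtain ⟨n, hn⟩ := h ((|C| + 1) / ε ^ 2) (by positivity)
  have hlt : u n < ε := by
    by_contra! hεn
    have : (|C| + 1) / ε ^ 2 * ε ^ 2 ≤ (|C| + 1) / ε ^ 2 * u n ^ 2 := by gcongr
    rw [div_mul_cancel₀ _ (by positivity)] at this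
    linarith [le_abs_self C]
  refine ⟨n, fun m hm => ?_⟩
  rw [Real.dist_0_eq_abs, abs_of_nonneg (hu0 m)]
  exact (hu hm).trans_lt hlt

section Sublevel

variable {X E : Type*} [TopologicalSpace X] [LocallyConnectedSpace X] [NormedAddCommGroup E]
  {f : X → E} {U : Set X} {R : ℝ} {x z : X}

theorem mem_interior_connectedComponentIn_sublevel (hU : IsOpen U) (hf : ContinuousOn f U)
    (hz : z ∈ connectedComponentIn (U ∩ f ⁻¹' closedBall 0 R) x) (hfz : ‖f z‖ < R) :
    z ∈ interior (connectedComponentIn (U ∩ f ⁻¹' closedBall 0 R) x) := by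
  have hzU : z ∈ U := (connectedComponentIn_subset _ _ hz).1
  have hS : U ∩ f ⁻¹' closedBall 0 R ∈ 𝓝 z :=
    inter_mem (hU.mem_nhds hzU) ((hf.continuousAt (hU.mem_nhds hzU)).preimage_mem_nhds
      (closedBall_mem_nhds_of_mem (mem_ball_zero_iff.2 hfz)))
  rw [mem_interior_iff_mem_nhds, connectedComponentIn_eq hz]
  exact connectedComponentIn_mem_nhds hS

theorem le_norm_of_mem_frontier_connectedComponentIn_sublevel (hU : IsOpen U)
    (hf : ContinuousOn f U) (hK : IsClosed (connectedComponentIn (U ∩ f ⁻¹' closedBall 0 R) x))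
    (hz : z ∈ frontier (connectedComponentIn (U ∩ f ⁻¹' closedBall 0 R) x)) : R ≤ ‖f z‖ :=
  not_lt.1 fun h =>
    hz.2 (mem_interior_connectedComponentIn_sublevel hU hf (hK.frontier_subset hz) h)

end Sublevel

section AnalyticOrder

variable {𝕜 : Type*} [NontriviallyNormedField 𝕜]

theorem AnalyticAt.analyticOrderAt_eq_sInf_iteratedDeriv [CharZero 𝕜] {E : Type*}
    [NormedAddCommGroup E] [NormedSpace 𝕜 E] [CompleteSpace E] {f : 𝕜 → E} {w : 𝕜}
    (hf : AnalyticAt 𝕜 f w) (hw : f w = 0) (hfin : analyticOrderAt f w ≠ ⊤) :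
    analyticOrderAt f w = ((sInf {n : ℕ | 0 < n ∧ iteratedDeriv n f w ≠ 0} : ℕ) : ℕ∞) := by
  obtain ⟨m, hm⟩ := ENat.ne_top_iff_exists.mp hfin
  obtain ⟨hlt, hm_ne⟩ := (analyticOrderAt_eq_nat_iff_iteratedDeriv_eq_zero hf).mp hm.symm
  have hpos : 0 < m := Nat.pos_of_ne_zero (by rintro rfl; simp [hw] at hm_ne)
  rw [← hm, Nat.cast_inj]
  exact le_antisymm (le_csInf ⟨m, hpos, hm_ne⟩ fun n hn => not_lt.1 fun h => hn.2 (hlt n h))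
    (Nat.sInf_le ⟨hpos, hm_ne⟩)

variable [DecidableEq 𝕜] {ι : Type*} {a : ι → 𝕜} {s : Finset ι} {w : 𝕜}

theorem analyticOrderAt_prod_sub_s1 :
    analyticOrderAt (fun z => ∏ i ∈ s, (z - a i)) w = #{i ∈ s | a i = w} := by
  classical
  induction s using Finset.induction_on with
  | empty => simp [analyticOrderAt_eq_zero]
  | insert j s hj ih =>
    simp_rw [Finset.prod_insert hj]
    rw [show (fun z => (z - a j) * ∏ i ∈ s, (z - a i)) = (· - a j) * fun z => ∏ i ∈ s, (z - a i)
      from rfl, analyticOrderAt_mul (by fun_prop) (by fun_prop), ih, Finset.filter_insert]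
    by_cases hjw : a j = w
    · subst hjw
      simp [Finset.card_insert_of_notMem (fun h => hj (Finset.mem_filter.1 h).1), add_comm]
    · simp [hjw, analyticOrderAt_id_sub_const_of_ne (Ne.symm hjw)]

theorem analyticOrderAt_eq_card_add_of_eq_prod_sub_mul {g H : 𝕜 → 𝕜} (hH : AnalyticAt 𝕜 H w)
    (hgH : ∀ᶠ z in 𝓝 w, g z = (∏ i ∈ s, (z - a i)) * H z) :
    analyticOrderAt g w = #{i ∈ s | a i = w} + analyticOrderAt H w := by
  rw [analyticOrderAt_congr hgH, ← analyticOrderAt_prod_sub_s1]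
  exact analyticOrderAt_mul (by fun_prop) hH

theorem apply_eq_zero_iff_card_lt_of_eq_prod_sub_mul {g H : 𝕜 → 𝕜} (hH : AnalyticAt 𝕜 H w)
    (hgH : ∀ᶠ z in 𝓝 w, g z = (∏ i ∈ s, (z - a i)) * H z) :
    H w = 0 ↔ (#{i ∈ s | a i = w} : ℕ∞) < analyticOrderAt g w := by
  rw [analyticOrderAt_eq_card_add_of_eq_prod_sub_mul hH hgH, ← hH.analyticOrderAt_ne_zero,
    ← pos_iff_ne_zero]
  conv_lhs => rw [← ENat.add_lt_add_iff_left (ENat.natCast_ne_top #{i ∈ s | a i = w}), add_zero]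

end AnalyticOrder

theorem exists_eq_prod_sub_mul_of_encard_le {g : ℂ → ℂ} {U : Set ℂ} {a : ℕ → ℂ} (hU : IsOpen U)
    (hg : DifferentiableOn ℂ g U) (ha : ∀ i, a i ∈ U)
    (hmult : ∀ w ∈ U, {i | a i = w}.encard ≤ analyticOrderAt g w) (N : ℕ) :
    ∃ H, DifferentiableOn ℂ H U ∧ ∀ z ∈ U, g z = (∏ i ∈ Finset.range N, (z - a i)) * H z := by
  induction N with
  | zero => exact ⟨g, hg, by simp⟩
  | succ N ih =>
    obtain ⟨H, hH, hgH⟩ := ih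
    have hU_nhds : U ∈ 𝓝 (a N) := hU.mem_nhds (ha N)
    have hcard :
        #{i ∈ Finset.range (N + 1) | a i = a N} = #{i ∈ Finset.range N | a i = a N} + 1 := by
      rw [Finset.range_add_one, Finset.filter_insert, if_pos rfl,
        Finset.card_insert_of_notMem (by simp)]
    have hHN : H (a N) = 0 := by
      refine (apply_eq_zero_iff_card_lt_of_eq_prod_sub_mul
        (hH.analyticAt hU_nhds) (eventually_of_mem hU_nhds hgH)).2 ?_
      calc (#{i ∈ Finset.range N | a i = a N} : ℕ∞)
          < #{i ∈ Finset.range (N + 1) | a i = a N} := by rw [hcard]; norm_cast; omega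
        _ ≤ {i | a i = a N}.encard := by
          rw [← Set.encard_coe_eq_coe_finsetCard]
          exact Set.encard_le_encard fun i hi => (Finset.mem_filter.1 hi).2
        _ ≤ analyticOrderAt g (a N) := hmult _ (ha N)
    refine ⟨dslope H (a N), (Complex.differentiableOn_dslope hU_nhds).2 hH, fun z hz => ?_⟩
    have hdslope := sub_smul_dslope H (a N) z
    rw [hHN, sub_zero, smul_eq_mul] at hdslope
    rw [hgH z hz, ← hdslope, Finset.prod_range_succ]
    ring

theorem finite_setOf_mem_of_encard_eq_analyticOrderAt {g : ℂ → ℂ} {U K : Set ℂ} {a : ℕ → ℂ}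
    {z₀ : ℂ} (hg : AnalyticOnNhd ℂ g U) (hU : IsConnected U) (hz₀ : z₀ ∈ U) (hgz₀ : g z₀ ≠ 0)
    (hK : IsCompact K) (hKU : K ⊆ U)
    (hzeros : ∀ w ∈ U, {i | a i = w}.encard = analyticOrderAt g w) : {i | a i ∈ K}.Finite := by
  have hZ : (K \ g ⁻¹' {0}ᶜ).Finite := hK.finite_sdiff_of_mem_codiscreteWithin
    (codiscreteWithin_mono hKU (hg.preimage_zero_mem_codiscreteWithin hgz₀ hz₀ hU))
  refine (hZ.preimage' fun w hw => ?_).subset fun i hi => ⟨hi, ?_⟩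
  · change {i | a i = w}.Finite
    rw [← Set.encard_ne_top_iff, hzeros w (hKU hw.1)]
    exact hg.analyticOrderAt_ne_top_of_isPreconnected hU.isPreconnected hz₀ (hKU hw.1)
      ((hg z₀ hz₀).analyticOrderAt_eq_zero.2 hgz₀ ▸ ENat.zero_ne_top)
  · have hord : analyticOrderAt g (a i) ≠ 0 := by
      rw [← hzeros _ (hKU hi), Set.encard_ne_zero]
      exact ⟨i, rfl⟩
    simpa using apply_eq_zero_of_analyticOrderAt_ne_zero hord

theorem mul_prod_norm_le_norm_of_le_norm_on_frontier {K : Set ℂ} {H : ℂ → ℂ} {a : ℕ → ℂ}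
    {s : Finset ℕ} {R : ℝ} (hK : IsCompact K) (hK1 : K ⊆ closedBall 0 1) (h0 : 0 ∈ interior K)
    (hH : DifferentiableOn ℂ H K) (hH0 : ∀ z ∈ K, H z ≠ 0) (ha : ∀ i ∈ s, ‖a i‖ < 1)
    (hR : 0 ≤ R) (hfr : ∀ z ∈ frontier K, R ≤ ‖z * (∏ i ∈ s, (z - a i)) * H z‖) :
    R * ∏ i ∈ s, ‖a i‖ ≤ ‖H 0‖ := by
  set B : ℂ → ℂ := fun z => ∏ i ∈ s, (1 - conj (a i) * z)
  have hB : ∀ z ∈ K, B z ≠ 0 := fun z hz => Finset.prod_ne_zero_iff.2 fun i hi =>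
    one_sub_conj_mul_ne_zero_of_norm_lt_one (ha i hi) (by simpa using hK1 hz)
  -- `ψ = R z (∏ (z - aᵢ) / B)² / f` for `f = z ∏ (z - aᵢ) H`, so `|ψ| ≤ 1` where `|f| ≥ R`.
  set ψ : ℂ → ℂ := fun z => R * (∏ i ∈ s, (z - a i)) / (B z ^ 2 * H z)
  have hψ : DifferentiableOn ℂ ψ K := DifferentiableOn.div (by fun_prop)
    ((DifferentiableOn.pow (by fun_prop) 2).mul hH)
    fun z hz => mul_ne_zero (pow_ne_zero 2 (hB z hz)) (hH0 z hz)
  have hψ_frontier : ∀ z ∈ frontier (interior K), ‖ψ z‖ ≤ 1 := by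
    intro z hz
    have hzK : z ∈ K := hK.isClosed.frontier_subset (frontier_interior_subset hz)
    have hz1 : ‖z‖ ≤ 1 := by simpa using hK1 hzK
    have hA_le : ‖∏ i ∈ s, (z - a i)‖ ≤ ‖B z‖ := by
      simp only [B, norm_prod]
      exact Finset.prod_le_prod (fun _ _ => norm_nonneg _)
        fun i hi => norm_sub_le_norm_one_sub_conj_mul (ha i hi).le hz1
    have hRz := hfr z (frontier_interior_subset hz)
    rw [norm_div, div_le_one (norm_pos_iff.2 (mul_ne_zero (pow_ne_zero 2 (hB z hzK)) (hH0 z hzK)))]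
    simp only [norm_mul, norm_pow, Complex.norm_real, Real.norm_of_nonneg hR] at hRz ⊢
    calc R * ‖∏ i ∈ s, (z - a i)‖
        ≤ ‖z‖ * ‖∏ i ∈ s, (z - a i)‖ * ‖H z‖ * ‖∏ i ∈ s, (z - a i)‖ := by gcongr
      _ ≤ 1 * ‖∏ i ∈ s, (z - a i)‖ * ‖H z‖ * ‖∏ i ∈ s, (z - a i)‖ := by gcongr
      _ = ‖∏ i ∈ s, (z - a i)‖ ^ 2 * ‖H z‖ := by ring
      _ ≤ ‖B z‖ ^ 2 * ‖H z‖ := by gcongr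
  have hψ0 := Complex.norm_le_of_forall_mem_frontier_norm_le
    (hK.isBounded.subset interior_subset) (hψ.mono hK.isClosed.closure_interior_subset).diffContOnCl
    hψ_frontier (subset_closure h0)
  have hH00 : 0 < ‖H 0‖ := norm_pos_iff.2 (hH0 0 (interior_subset h0))
  simpa [ψ, B, norm_prod, Real.norm_of_nonneg hR, div_le_one hH00] using hψ0

theorem exists_mul_prod_norm_sq_le_of_le_norm_on_frontier {g : ℂ → ℂ} {a : ℕ → ℂ} {K : Set ℂ}
    {R : ℝ} (hg : DifferentiableOn ℂ g (ball 0 1)) (hg0 : g 0 ≠ 0) (ha : ∀ i, a i ∈ ball 0 1)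
    (hzeros : ∀ w ∈ ball 0 1, {i | a i = w}.encard = analyticOrderAt g w)
    (hK : IsCompact K) (hKD : K ⊆ ball 0 1) (h0 : 0 ∈ interior K) (hR : 0 ≤ R)
    (hfr : ∀ z ∈ frontier K, R ≤ ‖z * g z‖) :
    ∃ N, R * (∏ i ∈ Finset.range N, ‖a i‖) ^ 2 ≤ ‖g 0‖ := by
  have hgA := hg.analyticOnNhd isOpen_ball
  have h0D : (0 : ℂ) ∈ ball 0 1 := mem_ball_self one_pos
  obtain ⟨M, hM⟩ := (finite_setOf_mem_of_encard_eq_analyticOrderAt hgA (isConnected_ball one_pos)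
    h0D hg0 hK hKD hzeros).bddAbove
  set N := M + 1
  obtain ⟨H, hH, hgH⟩ := exists_eq_prod_sub_mul_of_encard_le isOpen_ball hg ha
    (fun w hw => (hzeros w hw).le) N
  have hgH_nhds : ∀ w ∈ ball (0 : ℂ) 1,
      ∀ᶠ z in 𝓝 w, g z = (∏ i ∈ Finset.range N, (z - a i)) * H z :=
    fun w hw => eventually_of_mem (isOpen_ball.mem_nhds hw) hgH
  have hH0 : ∀ w ∈ K, H w ≠ 0 := by
    intro w hw
    have hfiber : {i | a i = w} = ↑{i ∈ Finset.range N | a i = w} := by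
      ext i
      simp only [Set.mem_ofPred_eq, Finset.coe_filter, Finset.mem_range]
      exact ⟨fun h => ⟨Nat.lt_succ_of_le (hM (h ▸ hw : a i ∈ K)), h⟩, And.right⟩
    rw [Ne, apply_eq_zero_iff_card_lt_of_eq_prod_sub_mul (hH.analyticAt
      (isOpen_ball.mem_nhds (hKD hw))) (hgH_nhds w (hKD hw)), ← hzeros w (hKD hw), hfiber,
      Set.encard_coe_eq_coe_finsetCard]
    exact lt_irrefl _
  have hbound := mul_prod_norm_le_norm_of_le_norm_on_frontier hK (hKD.trans ball_subset_closedBall)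
    h0 (hH.mono hKD) hH0 (fun i _ => mem_ball_zero_iff.1 (ha i)) hR fun z hz => by
      simpa [hgH z (hKD (hK.isClosed.frontier_subset hz)), mul_assoc] using hfr z hz
  refine ⟨N, ?_⟩
  calc R * (∏ i ∈ Finset.range N, ‖a i‖) ^ 2
      = (R * ∏ i ∈ Finset.range N, ‖a i‖) * ∏ i ∈ Finset.range N, ‖a i‖ := by ring
    _ ≤ ‖H 0‖ * ∏ i ∈ Finset.range N, ‖a i‖ := by gcongr
    _ = ‖g 0‖ := by simp [hgH 0 h0D, norm_prod, mul_comm]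

theorem encard_eq_analyticOrderAt_dslope {f : ℂ → ℂ} {U : Set ℂ} {a : ℕ → ℂ} (hU : IsOpen U)
    (hUc : IsPreconnected U) (h0 : 0 ∈ U) (hf : DifferentiableOn ℂ f U) (hf0 : f 0 = 0)
    (hf'0 : deriv f 0 ≠ 0) (ha : ∀ i, a i ≠ 0 ∧ f (a i) = 0)
    (hmult : ∀ x ∈ U, x ≠ 0 → f x = 0 →
      {i | a i = x}.encard = ((sInf {n : ℕ | 0 < n ∧ iteratedDeriv n f x ≠ 0} : ℕ) : ℕ∞)) :
    ∀ w ∈ U, {i | a i = w}.encard = analyticOrderAt (dslope f 0) w := by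
  have hgA := ((Complex.differentiableOn_dslope (hU.mem_nhds h0)).2 hf).analyticOnNhd hU
  have hg0 : analyticOrderAt (dslope f 0) 0 = 0 := by
    rwa [(hgA 0 h0).analyticOrderAt_eq_zero, dslope_same]
  have hfg : f = (· - 0) * dslope f 0 := funext fun z => by
    simpa [hf0] using (sub_smul_dslope f 0 z).symm
  intro w hw
  rcases eq_or_ne w 0 with rfl | hw0
  · rw [hg0, Set.encard_eq_zero]
    exact Set.eq_empty_of_forall_notMem fun i hi => (ha i).1 hi
  have hord : analyticOrderAt f w = analyticOrderAt (dslope f 0) w := by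
    nth_rw 1 [hfg]
    rw [analyticOrderAt_mul (by fun_prop) (hgA w hw),
      analyticOrderAt_id_sub_const_of_ne hw0, zero_add]
  by_cases hfw : f w = 0
  · rw [hmult w hw hw0 hfw, ← hord, (hf.analyticOnNhd hU w hw).analyticOrderAt_eq_sInf_iteratedDeriv
      hfw (hord ▸ hgA.analyticOrderAt_ne_top_of_isPreconnected hUc h0 hw (hg0 ▸ ENat.zero_ne_top))]
  · rw [← hord, (hf.analyticOnNhd hU w hw).analyticOrderAt_eq_zero.2 hfw, Set.encard_eq_zero]
    exact Set.eq_empty_of_forall_notMem fun i hi => hfw (hi ▸ (ha i).2)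

theorem zero_product_of_surjective_semiproper_general (f : ℂ → ℂ)
    (hf : DifferentiableOn ℂ f (Metric.ball (0 : ℂ) 1))
    (hsemiproper : ∀ K : Set ℂ, IsCompact K →
      ∀ z ∈ Metric.ball (0 : ℂ) 1 ∩ f ⁻¹' K,
        IsCompact (connectedComponentIn (Metric.ball (0 : ℂ) 1 ∩ f ⁻¹' K) z))
    (hf0 : f 0 = 0) (hf'0 : deriv f 0 ≠ 0)
    (a : ℕ → ℂ)
    (ha : ∀ i, a i ∈ Metric.ball (0 : ℂ) 1 ∧ a i ≠ 0 ∧ f (a i) = 0)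
    (hmult : ∀ x ∈ Metric.ball (0 : ℂ) 1, x ≠ 0 → f x = 0 →
      Set.encard {i | a i = x} =
        ((sInf {n : ℕ | 0 < n ∧ iteratedDeriv n f x ≠ 0} : ℕ) : ℕ∞)) :
    Tendsto (fun N => ∏ i ∈ Finset.range N, ‖a i‖) atTop (nhds 0) := by
  have h0D : (0 : ℂ) ∈ ball 0 1 := mem_ball_self one_pos
  have hfg : ∀ z, f z = z * dslope f 0 z := fun z => by
    simpa [hf0] using (sub_smul_dslope f 0 z).symm
  have hzeros := encard_eq_analyticOrderAt_dslope isOpen_ball (convex_ball 0 1).isPreconnected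
    h0D hf hf0 hf'0 (fun i => (ha i).2) hmult
  have ha1 : ∀ i, ‖a i‖ ≤ 1 := fun i => (mem_ball_zero_iff.1 (ha i).1).le
  refine Antitone.tendsto_zero_of_forall_mul_sq_le (C := ‖dslope f 0 0‖)
    (antitone_nat_of_succ_le fun n => by
      simpa [Finset.prod_range_succ] using mul_le_of_le_one_right (by positivity) (ha1 n))
    (fun n => by positivity) fun R hR => ?_
  set K := connectedComponentIn (ball 0 1 ∩ f ⁻¹' closedBall 0 R) 0
  have h0S : (0 : ℂ) ∈ ball 0 1 ∩ f ⁻¹' closedBall 0 R := ⟨h0D, by simp [hf0, hR.le]⟩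
  have hK : IsCompact K := hsemiproper _ (isCompact_closedBall 0 R) 0 h0S
  exact exists_mul_prod_norm_sq_le_of_le_norm_on_frontier
    ((Complex.differentiableOn_dslope (isOpen_ball.mem_nhds h0D)).2 hf)
    (by rwa [dslope_same]) (fun i => (ha i).1) hzeros hK
    ((connectedComponentIn_subset _ _).trans inter_subset_left)
    (mem_interior_connectedComponentIn_sublevel isOpen_ball hf.continuousOn
      (mem_connectedComponentIn h0S) (by simpa [hf0]))
    hR.le fun z hz => hfg z ▸ le_norm_of_mem_frontier_connectedComponentIn_sublevel isOpen_ball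
      hf.continuousOn hK.isClosed hz

/-- Let `f` be holomorphic on the unit disc, surjective onto ℂ, and semi-proper
(every connected component of the preimage of a compact set is compact in `D`).
If `f 0 = 0` and `f'(0) ≠ 0`, then the product of the moduli of the zeros of `f`
other than `0`, listed with multiplicity, is `0`: for any sequence `(aᵢ)`
enumerating those zeros with multiplicity, the partial products `∏_{i<N} |aᵢ|`
tend to `0`. -/
theorem zero_product_of_surjective_semiproper (f : ℂ → ℂ)
    (hf : DifferentiableOn ℂ f (Metric.ball (0 : ℂ) 1))
    (hsurj : ∀ w : ℂ, ∃ z ∈ Metric.ball (0 : ℂ) 1, f z = w)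
    (hsemiproper : ∀ K : Set ℂ, IsCompact K →
      ∀ z ∈ Metric.ball (0 : ℂ) 1 ∩ f ⁻¹' K,
        IsCompact (connectedComponentIn (Metric.ball (0 : ℂ) 1 ∩ f ⁻¹' K) z))
    (hf0 : f 0 = 0) (hf'0 : deriv f 0 ≠ 0)
    (a : ℕ → ℂ)
    (ha : ∀ i, a i ∈ Metric.ball (0 : ℂ) 1 ∧ a i ≠ 0 ∧ f (a i) = 0)
    (hmult : ∀ x ∈ Metric.ball (0 : ℂ) 1, x ≠ 0 → f x = 0 →
      Set.encard {i | a i = x} =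
        ((sInf {n : ℕ | 0 < n ∧ iteratedDeriv n f x ≠ 0} : ℕ) : ℕ∞)) :
    Tendsto (fun N => ∏ i ∈ Finset.range N, ‖a i‖) atTop (nhds 0) :=
  zero_product_of_surjective_semiproper_general f hf hsemiproper hf0 hf'0 a ha hmult
end

section
/- Let f be holomorphic on the unit disc D with u = Re f and v = Im f. Suppose there is a nonconstant closed arc γ ⊆ ∂D such that for every M > 0 there is a neighborhood U_M of γ in ℂ with u(z) > M for all z in U_M ∩ D. Then v is unbounded on D. -/
/-!
If `|Im f| ≤ C` on the disc, then `g = 1 / (f - i(C + 1))` is holomorphic with `‖g‖ ≤ 1`, and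
`g → 0` at the arc since `Re f → ∞` there. Finitely many rotations `ωₖ` of the arc cover the
circle, so `G z = ∏ₖ g (ωₖ z)` is uniformly small near the whole circle: every factor is at most
`1` and one of them is small. By the maximum principle `‖g 0‖ ^ n = ‖G 0‖` is arbitrarily small,
contradicting `g 0 ≠ 0`.
-/

open Complex Metric Real Filter Topology

def unitCircleArc (ε : ℝ) : Set ℂ := {z | ∃ θ : ℝ, |θ| ≤ ε ∧ z = exp (θ * I)}

noncomputable def unitRoot (n k : ℕ) : ℂ := exp ((2 * π * k / n : ℝ) * I)

lemma norm_unitRoot (n k : ℕ) : ‖unitRoot n k‖ = 1 := norm_exp_ofReal_mul_I _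

lemma unitCircleArc_mono {ε ε' : ℝ} (h : ε ≤ ε') : unitCircleArc ε ⊆ unitCircleArc ε' :=
  fun _ ⟨θ, hθ, hz⟩ => ⟨θ, hθ.trans h, hz⟩

lemma exists_unitRoot_mul_mem_unitCircleArc {n : ℕ} (hn : 0 < n) (θ : ℝ) :
    ∃ k < n, unitRoot n k * exp (θ * I) ∈ unitCircleArc (π / n) := by
  have hn' : (0 : ℝ) < n := by exact_mod_cast hn
  -- Rotating by the nearest multiple `2πj/n` of `2π/n` to `-θ` moves `θ` into `[-π/n, π/n]`;
  -- reducing `j` mod `n` changes the rotation angle by a multiple of `2π`.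
  set j : ℤ := round (-(θ * n) / (2 * π))
  have hjn : (j % n).toNat = j - n * (j / n) := by
    rw [Int.toNat_of_nonneg (Int.emod_nonneg _ (by exact_mod_cast hn.ne'))]; exact Int.emod_def _ _
  have hlt := Int.emod_lt_of_pos j (by exact_mod_cast hn : (0 : ℤ) < n)
  refine ⟨(j % n).toNat, by omega, θ + 2 * π * j / n, ?_, ?_⟩
  · calc |θ + 2 * π * j / n| = 2 * π / n * |j - -(θ * n) / (2 * π)| := by
          rw [← abs_of_pos (by positivity : 0 < 2 * π / n), ← abs_mul]
          congr 1; field_simp; ring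
      _ ≤ 2 * π / n * (1 / 2) := by gcongr; rw [abs_sub_comm]; exact abs_sub_round _
      _ = π / n := by ring
  · rw [unitRoot, ← Complex.exp_add, exp_eq_exp_iff_exists_int]
    refine ⟨-(j / n), ?_⟩
    have hnC : (n : ℂ) ≠ 0 := by exact_mod_cast hn.ne'
    have hk : ((j % n).toNat : ℝ) = j - n * (j / n : ℤ) := by exact_mod_cast hjn
    push_cast [hk]
    field_simp
    ring

lemma eventually_sphere_subset_of_sphere_subset_isOpen {E : Type*} [NormedAddCommGroup E]
    [NormedSpace ℝ E] [ProperSpace E] {R : ℝ} (hR : 0 < R) {W : Set E} (hW : IsOpen W)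
    (hRW : sphere (0 : E) R ⊆ W) : ∀ᶠ r in 𝓝[<] R, sphere (0 : E) r ⊆ W := by
  obtain ⟨ρ, hρ, hρW⟩ := (isCompact_sphere (0 : E) R).exists_thickening_subset_open hW hRW
  filter_upwards [Ioo_mem_nhdsLT (max_lt (sub_lt_self R hρ) hR)] with r ⟨hr, hrR⟩ z hz
  have hr0 : 0 < r := (le_max_right _ _).trans_lt hr
  rw [mem_sphere_zero_iff_norm] at hz
  refine hρW (mem_thickening_iff.mpr ⟨(R / r) • z, ?_, ?_⟩)
  · rw [mem_sphere_zero_iff_norm, norm_smul, hz, Real.norm_of_nonneg (by positivity)]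
    field_simp
  · calc dist z ((R / r) • z) = ‖(1 - R / r) • z‖ := by rw [dist_eq_norm, sub_smul, one_smul]
      _ = R - r := by
        rw [norm_smul, hz, Real.norm_of_nonpos, neg_sub]
        · field_simp
        · rw [sub_nonpos, le_div_iff₀ hr0]; linarith
      _ < ρ := by linarith [le_max_left (R - ρ) 0]

lemma norm_le_of_norm_le_near_sphere {F : Type*} [NormedAddCommGroup F] [NormedSpace ℂ F]
    {G : ℂ → F} {R δ : ℝ} (hR : 0 < R)
    (hG : DifferentiableOn ℂ G (ball 0 R)) {W : Set ℂ} (hW : IsOpen W)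
    (hRW : sphere (0 : ℂ) R ⊆ W) (hGW : ∀ z ∈ W ∩ ball 0 R, ‖G z‖ ≤ δ) {w : ℂ}
    (hw : w ∈ ball 0 R) : ‖G w‖ ≤ δ := by
  have hwR : ∀ᶠ r in 𝓝[<] R, r ∈ Set.Ioo ‖w‖ R := Ioo_mem_nhdsLT (mem_ball_zero_iff.mp hw)
  obtain ⟨r, hrW, hwr, hr⟩ :=
    ((eventually_sphere_subset_of_sphere_subset_isOpen hR hW hRW).and hwR).exists
  have hr0 : 0 < r := (norm_nonneg w).trans_lt hwr
  refine Complex.norm_le_of_forall_mem_frontier_norm_le isBounded_ball ?_ (fun z hz => ?_)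
    (subset_closure (mem_ball_zero_iff.mpr hwr))
  · refine DifferentiableOn.diffContOnCl ?_
    rw [closure_ball _ hr0.ne']
    exact hG.mono (closedBall_subset_ball hr)
  · rw [frontier_ball _ hr0.ne'] at hz
    refine hGW z ⟨hrW hz, ?_⟩
    rwa [mem_ball_zero_iff, mem_sphere_zero_iff_norm.mp hz]

lemma norm_prod_le_norm_of_norm_le_one {ι R : Type*} [NormedCommRing R] [NormOneClass R]
    {s : Finset ι} {a : ι → R} (h : ∀ j ∈ s, ‖a j‖ ≤ 1) {i : ι} (hi : i ∈ s) :
    ‖∏ j ∈ s, a j‖ ≤ ‖a i‖ := by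
  classical
  calc ‖∏ j ∈ s, a j‖ ≤ ∏ j ∈ s, ‖a j‖ := Finset.norm_prod_le _ _
    _ = ‖a i‖ * ∏ j ∈ s.erase i, ‖a j‖ := (Finset.mul_prod_erase s _ hi).symm
    _ ≤ ‖a i‖ * 1 := by
      gcongr
      exact Finset.prod_le_one (fun _ _ => norm_nonneg _) fun j hj =>
        h j (Finset.mem_of_mem_erase hj)
    _ = ‖a i‖ := mul_one _

lemma sphere_subset_iUnion_preimage_unitRoot_mul {ε : ℝ} (hε : 0 < ε) {U : Set ℂ}
    (hU : unitCircleArc ε ⊆ U) :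
    sphere (0 : ℂ) 1 ⊆ ⋃ k ∈ Finset.range ⌈π / ε⌉₊, (unitRoot ⌈π / ε⌉₊ k * ·) ⁻¹' U := by
  intro z hz
  obtain ⟨θ, rfl⟩ := (norm_eq_one_iff z).mp (mem_sphere_zero_iff_norm.mp hz)
  have hn : 0 < ⌈π / ε⌉₊ := Nat.ceil_pos.mpr (by positivity)
  obtain ⟨k, hk, hkθ⟩ := exists_unitRoot_mul_mem_unitCircleArc hn θ
  have hπε : π / ⌈π / ε⌉₊ ≤ ε := by
    rw [div_le_iff₀ (by exact_mod_cast hn), ← div_le_iff₀' hε]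
    exact Nat.le_ceil _
  exact Set.mem_biUnion (Finset.mem_range.mpr hk) (hU (unitCircleArc_mono hπε hkθ))

lemma apply_zero_eq_zero_of_norm_le_near_unitCircleArc {g : ℂ → ℂ}
    (hg : DifferentiableOn ℂ g (ball 0 1)) (hg1 : ∀ z ∈ ball 0 1, ‖g z‖ ≤ 1) {ε : ℝ} (hε : 0 < ε)
    (hsmall : ∀ δ > 0, ∃ U, IsOpen U ∧ unitCircleArc ε ⊆ U ∧ ∀ z ∈ U ∩ ball 0 1, ‖g z‖ ≤ δ) :
    g 0 = 0 := by
  set n := ⌈π / ε⌉₊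
  have hn : n ≠ 0 := (Nat.ceil_pos.mpr (by positivity)).ne'
  have hmaps (k : ℕ) : Set.MapsTo (unitRoot n k * ·) (ball 0 1) (ball 0 1) := fun z hz => by
    simpa [norm_unitRoot] using hz
  suffices ‖g 0‖ ^ n ≤ 0 from norm_eq_zero.mp <| (pow_eq_zero_iff hn).mp <|
    le_antisymm this (by positivity)
  refine le_of_forall_gt_imp_ge_of_dense fun δ hδ => ?_
  obtain ⟨U, hU, hεU, hgU⟩ := hsmall δ hδ
  have hG : DifferentiableOn ℂ (fun z => ∏ k ∈ Finset.range n, g (unitRoot n k * z)) (ball 0 1) :=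
    DifferentiableOn.fun_finsetProd fun k _ => hg.comp (differentiableOn_id.const_mul _) (hmaps k)
  have hGU (z : ℂ) (hz : z ∈ (⋃ k ∈ Finset.range n, (unitRoot n k * ·) ⁻¹' U) ∩ ball 0 1) :
      ‖∏ k ∈ Finset.range n, g (unitRoot n k * z)‖ ≤ δ := by
    obtain ⟨k, hk, hkU⟩ := Set.mem_iUnion₂.mp hz.1
    exact (norm_prod_le_norm_of_norm_le_one (fun j _ => hg1 _ (hmaps j hz.2)) hk).trans
      (hgU _ ⟨hkU, hmaps k hz.2⟩)
  simpa only [mul_zero, Finset.prod_const, Finset.card_range, norm_pow] using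
    norm_le_of_norm_le_near_sphere one_pos hG
      (isOpen_biUnion fun k _ => hU.preimage (continuous_const_mul _))
      (sphere_subset_iUnion_preimage_unitRoot_mul hε hεU) hGU (mem_ball_self one_pos)

/-- If `f` is holomorphic on the unit disc and its real part `u = Re f` tends to `+∞`
near a nonconstant boundary arc `γ = {e^{iθ} : |θ| ≤ ε}` (in the sense that for every
`M > 0` there is a neighborhood `U` of `γ` with `u > M` on `U ∩ D`), then the
imaginary part `v = Im f` is unbounded on `D`. -/
theorem conjugate_unbounded_of_blowup_on_arc (f : ℂ → ℂ)
    (hf : DifferentiableOn ℂ f (Metric.ball (0 : ℂ) 1))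
    (ε : ℝ) (hε : 0 < ε)
    (γ : Set ℂ) (hγ : γ = {z : ℂ | ∃ θ : ℝ, |θ| ≤ ε ∧ z = Complex.exp (θ * Complex.I)})
    (hblow : ∀ M : ℝ, 0 < M → ∃ U : Set ℂ, IsOpen U ∧ γ ⊆ U ∧
      ∀ z ∈ U ∩ Metric.ball (0 : ℂ) 1, M < (f z).re) :
    ¬ ∃ C : ℝ, ∀ z ∈ Metric.ball (0 : ℂ) 1, |(f z).im| ≤ C := by
  rintro ⟨C, hC⟩
  set w : ℂ := (C + 1) * I
  have hre (z : ℂ) : (f z).re ≤ ‖f z - w‖ := by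
    simpa [w] using re_le_norm (f z - w)
  have him (z : ℂ) (hz : z ∈ ball 0 1) : 1 ≤ ‖f z - w‖ := by
    have : 1 ≤ |(f z - w).im| := by
      rw [abs_of_nonpos] <;> simp [w] <;> linarith [(abs_le.mp (hC z hz)).2]
    exact this.trans (abs_im_le_norm _)
  have hne (z : ℂ) (hz : z ∈ ball 0 1) : f z - w ≠ 0 :=
    norm_pos_iff.mp (one_pos.trans_le (him z hz))
  refine inv_ne_zero (hne 0 (mem_ball_self one_pos)) <|
    apply_zero_eq_zero_of_norm_le_near_unitCircleArc (g := fun z => (f z - w)⁻¹)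
      ((hf.sub_const w).inv hne) (fun z hz => ?_) hε fun δ hδ => ?_
  · simpa using inv_le_one_of_one_le₀ (him z hz)
  · obtain ⟨U, hU, hγU, hfU⟩ := hblow δ⁻¹ (inv_pos.mpr hδ)
    refine ⟨U, hU, by subst hγ; exact hγU, fun z hz => ?_⟩
    rw [norm_inv]
    exact inv_le_of_inv_le₀ hδ ((hfU z hz).trans_le (hre z)).le
end

section
/- Let (gᵢ)_{i∈ℕ} be holomorphic functions on a disc B_ε ⊆ ℂ centered at 0, with |gᵢ(η)| < 1 for all η ∈ B_ε and all i. Let G_k = g₁·g₂·⋯·g_k and Π(η) = ∏_{i=1}^∞ |gᵢ(η)| (the limit of the decreasing sequence |G_k(η)|). If Π(η) = 0 for all η ≠ 0 in B_ε, then Π(0) = 0; in particular Π is continuous at 0. -/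
/-!
By the mean value property, `‖G_k 0‖` is at most the average of `‖G_k‖` over a circle
`|η| = r < ε`. On that circle `‖G_k‖ ≤ 1` and `‖G_k η‖ → Π η = 0`, so the averages tend to `0`
by dominated convergence, and hence so does `‖G_k 0‖`.
-/

open Complex Metric Filter Topology MeasureTheory

namespace Real

variable {E : Type*} [NormedAddCommGroup E] [NormedSpace ℝ E] {c : ℂ} {R : ℝ}

theorem norm_circleAverage_le_circleAverage_norm (f : ℂ → E) :
    ‖circleAverage f c R‖ ≤ circleAverage (fun z ↦ ‖f z‖) c R := by
  rw [circleAverage, circleAverage, norm_smul, smul_eq_mul, norm_inv,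
    Real.norm_of_nonneg two_pi_pos.le]
  gcongr
  exact intervalIntegral.norm_integral_le_integral_norm two_pi_pos.le

theorem tendsto_circleAverage_of_dominated_convergence {ι : Type*} {l : Filter ι}
    [l.IsCountablyGenerated] {F : ι → ℂ → E} {f : ℂ → E} (C : ℝ)
    (hF_int : ∀ᶠ n in l, CircleIntegrable (F n) c R)
    (h_bound : ∀ᶠ n in l, ∀ z ∈ sphere c |R|, ‖F n z‖ ≤ C)
    (h_lim : ∀ z ∈ sphere c |R|, Tendsto (fun n ↦ F n z) l (𝓝 (f z))) :
    Tendsto (fun n ↦ circleAverage (F n) c R) l (𝓝 (circleAverage f c R)) := by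
  refine tendsto_const_nhds.smul
    (intervalIntegral.tendsto_integral_filter_of_dominated_convergence (fun _ ↦ C) ?_ ?_
      intervalIntegrable_const ?_)
  · filter_upwards [hF_int] with n hn using hn.def'.aestronglyMeasurable
  · filter_upwards [h_bound] with n hn
    exact ae_of_all _ fun θ _ ↦ hn _ (circleMap_mem_sphere' c R θ)
  · exact ae_of_all _ fun θ _ ↦ h_lim _ (circleMap_mem_sphere' c R θ)

end Real

namespace DiffContOnCl

variable {E : Type*} [NormedAddCommGroup E] [NormedSpace ℂ E] {f : ℂ → E} {c : ℂ} {R : ℝ}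

theorem continuousOn_sphere (hf : DiffContOnCl ℂ f (ball c |R|)) :
    ContinuousOn f (sphere c |R|) := by
  rcases eq_or_ne R 0 with rfl | hR
  · simp
  · exact hf.continuousOn.mono <| by
      rw [closure_ball c (abs_ne_zero.mpr hR)]; exact sphere_subset_closedBall

theorem norm_le_circleAverage_norm [CompleteSpace E] (hf : DiffContOnCl ℂ f (ball c |R|)) :
    ‖f c‖ ≤ Real.circleAverage (fun z ↦ ‖f z‖) c R :=
  hf.circleAverage ▸ Real.norm_circleAverage_le_circleAverage_norm f

theorem tendsto_apply_center_of_tendsto_on_sphere [CompleteSpace E] {ι : Type*} {l : Filter ι}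
    [l.IsCountablyGenerated] {F : ι → ℂ → E} (hF : ∀ n, DiffContOnCl ℂ (F n) (ball c |R|))
    (C : ℝ) (h_bound : ∀ n, ∀ z ∈ sphere c |R|, ‖F n z‖ ≤ C)
    (h_lim : ∀ z ∈ sphere c |R|, Tendsto (fun n ↦ F n z) l (𝓝 0)) :
    Tendsto (fun n ↦ F n c) l (𝓝 0) := by
  have h_avg : Tendsto (fun n ↦ Real.circleAverage (fun z ↦ ‖F n z‖) c R) l (𝓝 0) := by
    simpa [Real.circleAverage_const] using
      Real.tendsto_circleAverage_of_dominated_convergence (f := fun _ ↦ (0 : ℝ)) C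
      (.of_forall fun n ↦ ((hF n).continuousOn_sphere.norm).circleIntegrable')
      (.of_forall fun n z hz ↦ by rw [norm_norm]; exact h_bound n z hz)
      (fun z hz ↦ (tendsto_zero_iff_norm_tendsto_zero.mp (h_lim z hz)))
  exact tendsto_zero_iff_norm_tendsto_zero.mpr <|
    squeeze_zero (fun _ ↦ norm_nonneg _) (fun n ↦ (hF n).norm_le_circleAverage_norm) h_avg

end DiffContOnCl

/-- Let `gᵢ` be holomorphic functions on a disc `B_ε ⊆ ℂ` centered at `0` with
`|gᵢ| < 1`, and let `Π η = ∏_{i} |gᵢ(η)|` be the (decreasing) limit of the partial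
products. If `Π η = 0` for all `η ≠ 0` in `B_ε`, then `Π 0 = 0`; in particular `Π`
is continuous at `0`. -/
theorem infinite_product_vanishes_at_zero (ε : ℝ) (hε : 0 < ε)
    (g : ℕ → ℂ → ℂ)
    (hg : ∀ i, DifferentiableOn ℂ (g i) (Metric.ball (0 : ℂ) ε))
    (hlt : ∀ i, ∀ η ∈ Metric.ball (0 : ℂ) ε, ‖g i η‖ < 1)
    (Pi : ℂ → ℝ)
    (hPi : ∀ η ∈ Metric.ball (0 : ℂ) ε,
      Tendsto (fun k => ∏ i ∈ Finset.range k, ‖g i η‖) atTop (nhds (Pi η)))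
    (hzero : ∀ η ∈ Metric.ball (0 : ℂ) ε, η ≠ 0 → Pi η = 0) :
    Pi 0 = 0 ∧ ContinuousWithinAt Pi (Metric.ball (0 : ℂ) ε) 0 := by
  have h0 : (0 : ℂ) ∈ ball 0 ε := mem_ball_self hε
  have hdisc : closedBall (0 : ℂ) |ε / 2| ⊆ ball 0 ε :=
    closedBall_subset_ball (by rw [abs_of_pos (half_pos hε)]; exact half_lt_self hε)
  have hsphere : ∀ z ∈ sphere (0 : ℂ) |ε / 2|, z ∈ ball 0 ε ∧ z ≠ 0 := fun z hz ↦
    ⟨hdisc (sphere_subset_closedBall hz),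
      ne_of_mem_sphere hz (abs_ne_zero.mpr (half_pos hε).ne')⟩
  have hG : Tendsto (fun k ↦ ∏ i ∈ Finset.range k, g i 0) atTop (𝓝 0) := by
    refine DiffContOnCl.tendsto_apply_center_of_tendsto_on_sphere
      (F := fun k z ↦ ∏ i ∈ Finset.range k, g i z)
      (fun k ↦ (DifferentiableOn.fun_finsetProd fun i _ ↦ hg i).diffContOnCl_ball hdisc) 1
      (fun k z hz ↦ ?_) (fun z hz ↦ ?_) <;> obtain ⟨hzε, hz0⟩ := hsphere z hz
    · rw [norm_prod]
      exact Finset.prod_le_one (fun i _ ↦ norm_nonneg _) fun i _ ↦ (hlt i z hzε).le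
    · rw [tendsto_zero_iff_norm_tendsto_zero]
      simpa only [norm_prod, hzero z hzε hz0] using hPi z hzε
  have hPi0 : Pi 0 = 0 :=
    tendsto_nhds_unique (hPi 0 h0) (by simpa only [norm_prod, norm_zero] using hG.norm)
  have hPi_ball : Set.EqOn Pi 0 (ball 0 ε) := fun η hη ↦ by
    rcases eq_or_ne η 0 with rfl | hη0
    exacts [hPi0, hzero η hη hη0]
  exact ⟨hPi0, (continuousOn_const.congr hPi_ball).continuousWithinAt h0⟩
end

section
/- Let f = u + iv be holomorphic on the unit disc D. If v is bounded on D and for some ε > 0 and every M > 0 there is δ > 0 such that u(re^{iθ}) > M whenever 1−δ < r < 1 and |θ| ≤ ε, then we reach a contradiction; i.e., u cannot tend to +∞ uniformly on a boundary arc of positive length while v stays bounded. -/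
/-!
Choose `a > 0` with `a · sup |v| ≤ π / 2`. Then `exp (a f)` lies in the closed right half-plane, so
`g = (exp (a f) + 1)⁻¹` is holomorphic on the disc, bounded by `1`, and `‖g‖ ≤ exp (-a u)` tends to
`0` uniformly as the arc is approached. If `π / n ≤ ε`, every point of a circle `|z| = r` is rotated
into the arc by some `n`-th root of unity `ζ`, so `∏ ζ, g (ζ z)` is uniformly small on circles close
to the unit circle. By the maximum modulus principle its value `g 0 ^ n` at the centre vanishes,
but `g 0 ≠ 0`.
-/

open Complex Metric Polynomial

namespace Complex

theorem norm_le_norm_add_one_of_re_nonneg {w : ℂ} (hw : 0 ≤ w.re) : ‖w‖ ≤ ‖w + 1‖ := by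
  have h : ‖w‖ ^ 2 + (2 * w.re + 1) = ‖w + 1‖ ^ 2 := by
    simp only [Complex.sq_norm, normSq_add, map_one, mul_one]; ring
  nlinarith [norm_nonneg w, norm_nonneg (w + 1)]

theorem one_le_norm_add_one_of_re_nonneg {w : ℂ} (hw : 0 ≤ w.re) : 1 ≤ ‖w + 1‖ :=
  calc (1 : ℝ) ≤ (w + 1).re := by simpa using hw
    _ ≤ ‖w + 1‖ := re_le_norm _

theorem re_exp_nonneg_of_abs_im_le {w : ℂ} (hw : |w.im| ≤ Real.pi / 2) : 0 ≤ (exp w).re := by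
  rw [exp_re]
  exact mul_nonneg (Real.exp_pos _).le (Real.cos_nonneg_of_mem_Icc (abs_le.mp hw))

theorem norm_inv_exp_add_one_le_one {w : ℂ} (hw : |w.im| ≤ Real.pi / 2) :
    ‖(exp w + 1)⁻¹‖ ≤ 1 := by
  rw [norm_inv]
  exact inv_le_one_of_one_le₀ (one_le_norm_add_one_of_re_nonneg (re_exp_nonneg_of_abs_im_le hw))

theorem norm_inv_exp_add_one_le_exp_neg_re {w : ℂ} (hw : |w.im| ≤ Real.pi / 2) :
    ‖(exp w + 1)⁻¹‖ ≤ Real.exp (-w.re) := by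
  rw [norm_inv, Real.exp_neg, ← norm_exp]
  exact inv_anti₀ (norm_pos_iff.mpr (exp_ne_zero w))
    (norm_le_norm_add_one_of_re_nonneg (re_exp_nonneg_of_abs_im_le hw))

theorem norm_inv_exp_add_one_le_of_neg_log_le {w : ℂ} (hw : |w.im| ≤ Real.pi / 2) {η : ℝ}
    (hη : 0 < η) (hre : -Real.log η ≤ w.re) : ‖(exp w + 1)⁻¹‖ ≤ η :=
  calc ‖(exp w + 1)⁻¹‖ ≤ Real.exp (-w.re) := norm_inv_exp_add_one_le_exp_neg_re hw
    _ ≤ Real.exp (Real.log η) := Real.exp_le_exp.mpr (by linarith)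
    _ = η := Real.exp_log hη

theorem norm_eq_one_of_mem_nthRootsFinset {n : ℕ} (hn : 0 < n) {ζ : ℂ}
    (hζ : ζ ∈ nthRootsFinset n (1 : ℂ)) : ‖ζ‖ = 1 :=
  norm_eq_one_of_pow_eq_one ((mem_nthRootsFinset hn 1).mp hζ) hn.ne'

theorem exists_mem_nthRootsFinset_mul_eq {n : ℕ} (hn : 0 < n) (z : ℂ) :
    ∃ ζ ∈ nthRootsFinset n (1 : ℂ), ∃ θ : ℝ, |θ| ≤ Real.pi / n ∧ ζ * z = ‖z‖ * exp (θ * I) := by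
  set k : ℤ := round (-(z.arg * n) / (2 * Real.pi))
  refine ⟨exp ((2 * Real.pi * k / n : ℝ) * I), ?_, z.arg + 2 * Real.pi * k / n, ?_, ?_⟩
  · rw [mem_nthRootsFinset hn, ← exp_nat_mul, ← exp_int_mul_two_pi_mul_I k]
    congr 1
    push_cast
    field_simp
    exact mul_div_cancel_left₀ _ (Nat.cast_ne_zero.mpr hn.ne')
  · have hθ : z.arg + 2 * Real.pi * k / n
        = 2 * Real.pi / n * -(-(z.arg * n) / (2 * Real.pi) - k) := by
      field_simp
      ring
    rw [hθ, abs_mul, abs_neg, abs_of_pos (by positivity)]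
    calc 2 * Real.pi / n * |-(z.arg * n) / (2 * Real.pi) - k| ≤ 2 * Real.pi / n * (1 / 2) :=
          mul_le_mul_of_nonneg_left (abs_sub_round _) (by positivity)
      _ = Real.pi / n := by ring
  · conv_lhs => rw [← norm_mul_exp_arg_mul_I z]
    rw [mul_left_comm, ← exp_add]
    push_cast
    ring_nf

end Complex

theorem Finset.prod_le_of_mem_of_le_one {ι : Type*} {s : Finset ι} {a : ι → ℝ}
    (h0 : ∀ i ∈ s, 0 ≤ a i) (h1 : ∀ i ∈ s, a i ≤ 1) {j : ι} (hj : j ∈ s) :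
    ∏ i ∈ s, a i ≤ a j := by
  classical
  rw [← Finset.mul_prod_erase s a hj]
  exact mul_le_of_le_one_right (h0 j hj)
    (Finset.prod_le_one (fun i hi => h0 i (Finset.mem_of_mem_erase hi))
      (fun i hi => h1 i (Finset.mem_of_mem_erase hi)))

theorem norm_pow_card_le_of_norm_prod_rotations_le {g : ℂ → ℂ}
    (hg : DifferentiableOn ℂ g (ball 0 1)) {S : Finset ℂ} (hS : ∀ ζ ∈ S, ‖ζ‖ = 1)
    {r η : ℝ} (hr0 : 0 < r) (hr1 : r < 1)
    (hη : ∀ z ∈ sphere (0 : ℂ) r, ‖∏ ζ ∈ S, g (ζ * z)‖ ≤ η) : ‖g 0‖ ^ S.card ≤ η := by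
  have hmaps : ∀ ζ ∈ S, Set.MapsTo (ζ * ·) (ball (0 : ℂ) 1) (ball 0 1) := fun ζ hζ z hz => by
    simpa [norm_mul, hS ζ hζ] using hz
  have hdiff : DifferentiableOn ℂ (fun z => ∏ ζ ∈ S, g (ζ * z)) (ball 0 1) :=
    DifferentiableOn.fun_finsetProd fun ζ hζ =>
      hg.comp (differentiableOn_id.const_mul ζ) (hmaps ζ hζ)
  have hmax := norm_le_of_forall_mem_frontier_norm_le isBounded_ball
    (hdiff.diffContOnCl_ball (closedBall_subset_ball hr1))
    (by rwa [frontier_ball 0 hr0.ne']) (subset_closure (mem_ball_self hr0))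
  simpa [norm_prod] using hmax

theorem eq_zero_of_norm_le_one_of_small_near_arc {g : ℂ → ℂ}
    (hg : DifferentiableOn ℂ g (ball 0 1)) (hg1 : ∀ z ∈ ball (0 : ℂ) 1, ‖g z‖ ≤ 1)
    {ε : ℝ} (hε : 0 < ε)
    (hsmall : ∀ η > 0, ∃ δ > 0, ∀ r θ : ℝ, 0 < r → 1 - δ < r → r < 1 → |θ| ≤ ε →
      ‖g (r * exp (θ * I))‖ ≤ η) :
    g 0 = 0 := by
  set n := ⌈Real.pi / ε⌉₊
  have hn : 0 < n := Nat.ceil_pos.mpr (by positivity)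
  have hnε : Real.pi / n ≤ ε := (div_le_comm₀ hε (by positivity)).mp (Nat.le_ceil _)
  set S := nthRootsFinset n (1 : ℂ)
  have hS : ∀ ζ ∈ S, ‖ζ‖ = 1 := fun ζ hζ => norm_eq_one_of_mem_nthRootsFinset hn hζ
  suffices h : ∀ η > 0, ‖g 0‖ ^ S.card ≤ η by
    by_contra hg0
    have hpos : 0 < ‖g 0‖ ^ S.card := pow_pos (norm_pos_iff.mpr hg0) _
    linarith [h _ (half_pos hpos)]
  intro η hη
  obtain ⟨δ, hδ, hδη⟩ := hsmall η hη
  set r := max (1 - δ / 2) (1 / 2)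
  have hr0 : 0 < r := lt_max_of_lt_right one_half_pos
  have hr1 : r < 1 := max_lt (by linarith) one_half_lt_one
  have hrδ : 1 - δ < r := lt_max_of_lt_left (by linarith)
  refine norm_pow_card_le_of_norm_prod_rotations_le hg hS hr0 hr1 fun z hz => ?_
  have hzr : ‖z‖ = r := mem_sphere_zero_iff_norm.mp hz
  obtain ⟨ζ, hζS, θ, hθ, hζz⟩ := exists_mem_nthRootsFinset_mul_eq hn z
  have hzball : z ∈ ball (0 : ℂ) 1 := mem_ball_zero_iff.mpr (hzr ▸ hr1)
  calc ‖∏ ζ ∈ S, g (ζ * z)‖ = ∏ ζ ∈ S, ‖g (ζ * z)‖ := norm_prod _ _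
    _ ≤ ‖g (ζ * z)‖ :=
        Finset.prod_le_of_mem_of_le_one (fun _ _ => norm_nonneg _)
          (fun ξ hξ => hg1 _ (by simpa [norm_mul, hS ξ hξ] using hzball)) hζS
    _ ≤ η := by
        rw [hζz, hzr]
        exact hδη r θ hr0 hrδ hr1 (hθ.trans hnε)

/-- Let `f = u + iv` be holomorphic on the unit disc. It cannot happen that `v` is
bounded on `D` while `u` tends to `+∞` uniformly on a boundary arc of positive
length `{e^{iθ} : |θ| ≤ ε}`. -/
theorem no_bounded_conjugate_with_uniform_blowup (f : ℂ → ℂ)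
    (hf : DifferentiableOn ℂ f (Metric.ball (0 : ℂ) 1))
    (hv : ∃ C : ℝ, ∀ z ∈ Metric.ball (0 : ℂ) 1, |(f z).im| ≤ C)
    (ε : ℝ) (hε : 0 < ε)
    (hu : ∀ M : ℝ, 0 < M → ∃ δ : ℝ, 0 < δ ∧ ∀ r θ : ℝ,
      0 < r → 1 - δ < r → r < 1 → |θ| ≤ ε →
        M < (f ((r : ℂ) * Complex.exp (θ * Complex.I))).re) :
    False := by
  obtain ⟨C, hC⟩ := hv
  set a : ℝ := (|C| + 1)⁻¹
  have ha : 0 < a := by positivity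
  have him : ∀ z ∈ ball (0 : ℂ) 1, |((a : ℂ) * f z).im| ≤ Real.pi / 2 := fun z hz => by
    have haC : a * |C| ≤ 1 := by
      rw [inv_mul_le_iff₀ (by positivity)]; linarith
    rw [im_ofReal_mul, abs_mul, abs_of_pos ha]
    linarith [mul_le_mul_of_nonneg_left ((hC z hz).trans (le_abs_self C)) ha.le,
      Real.pi_gt_three]
  set g : ℂ → ℂ := fun z => (exp (a * f z) + 1)⁻¹
  have hne : ∀ z ∈ ball (0 : ℂ) 1, exp (a * f z) + 1 ≠ 0 := fun z hz =>
    norm_pos_iff.mp (one_pos.trans_le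
      (one_le_norm_add_one_of_re_nonneg (re_exp_nonneg_of_abs_im_le (him z hz))))
  have hg : DifferentiableOn ℂ g (ball 0 1) := ((hf.const_mul _).cexp.add_const 1).inv hne
  refine inv_ne_zero (hne 0 (mem_ball_self one_pos)) <|
    eq_zero_of_norm_le_one_of_small_near_arc hg
      (fun z hz => norm_inv_exp_add_one_le_one (him z hz)) hε fun η hη => ?_
  obtain ⟨δ, hδ, hδu⟩ := hu ((|Real.log η| + 1) / a) (by positivity)
  refine ⟨δ, hδ, fun r θ hr0 hrδ hr1 hθ => ?_⟩
  set w : ℂ := r * exp (θ * I)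
  have hw : w ∈ ball (0 : ℂ) 1 := by
    simpa [w, norm_mul, abs_of_pos hr0] using hr1
  refine norm_inv_exp_add_one_le_of_neg_log_le (him w hw) hη ?_
  have hMu := (div_lt_iff₀' ha).mp (hδu r θ hr0 hrδ hr1 hθ)
  rw [re_ofReal_mul]
  linarith [neg_abs_le (Real.log η)]
end
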